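/- arXiv:2001.08417 — 2 statements merged into one kernel-verified Lean document; each statement's English description precedes it below -/
import Mathlib

section
/- (Type C.3) Let π ∈ S_n and let w_1 = π_a and w_2 = π_b with 1 ≤ a ≤ b ≤ n. Suppose w_1 = y_i and w_2 = y_j are pinnacles of π with i < j, and suppose w_1 > Next_π(w_2) and w_2 > Prec_π(w_1). Then the reversal ρ(w_1, w_2) is balanced for π. -/
/-- The block reversal: reverses the block of `π` between positions `a` and `b`. -/
def rev (π : ℕ → ℕ) (a b : ℕ) : ℕ → ℕ := fun i =>
  if a ≤ i ∧ i ≤ b then π (a + b - i) else π i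

/-- Position `i` holds a pinnacle: `π (i-1) < π i > π (i+1)`. -/
def PinAt (π : ℕ → ℕ) (i : ℕ) : Prop := π (i - 1) < π i ∧ π (i + 1) < π i

/-- Position `i` holds a dell: `π (i-1) > π i < π (i+1)`. -/
def DellAt (π : ℕ → ℕ) (i : ℕ) : Prop := π i < π (i - 1) ∧ π i < π (i + 1)

/-- Position `i` is ascending: its element belongs to an ascending set of `π`. -/
def AscAt (π : ℕ → ℕ) (i : ℕ) : Prop := π (i - 1) < π i ∧ π i < π (i + 1)

/-- Position `i` is descending: its element belongs to a descending set of `π`. -/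
def DescAt (π : ℕ → ℕ) (i : ℕ) : Prop := π i < π (i - 1) ∧ π (i + 1) < π i

/-- The pinnacle set of `π ∈ S_n`, as a finset of values. -/
def pinFinset (n : ℕ) (π : ℕ → ℕ) : Finset ℕ :=
  ((Finset.Icc 1 n).filter fun i => π (i - 1) < π i ∧ π (i + 1) < π i).image π

/-- The reversal with endpoints at positions `a ≤ b` is balanced for `π`:
it does not modify the pinnacle set. -/
def BalancedRev (n : ℕ) (π : ℕ → ℕ) (a b : ℕ) : Prop :=
  pinFinset n (rev π a b) = pinFinset n π

/-- Apply a sequence of reversals (each given by its pair of positions). -/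
def applySeq (π : ℕ → ℕ) : List (ℕ × ℕ) → ℕ → ℕ
  | [] => π
  | ab :: L => applySeq (rev π ab.1 ab.2) L

/-- Every reversal of the sequence is balanced for the permutation to which
it is applied. -/
def IsBalancedSeq (n : ℕ) (π : ℕ → ℕ) : List (ℕ × ℕ) → Prop
  | [] => True
  | ab :: L => 1 ≤ ab.1 ∧ ab.1 ≤ ab.2 ∧ ab.2 ≤ n ∧ BalancedRev n π ab.1 ab.2 ∧
      IsBalancedSeq n (rev π ab.1 ab.2) L

/-- `π` is the extension of a permutation of `{1,…,n}` by the boundary values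
`π 0 = n+1` and `π (n+1) = n+2`. -/
def IsExtPerm (n : ℕ) (π : ℕ → ℕ) : Prop :=
  Set.BijOn π (Set.Icc 1 n) (Set.Icc 1 n) ∧ π 0 = n + 1 ∧ π (n + 1) = n + 2

/-- The positions of the pinnacles of `π`, from left to right. -/
def pinPosList (n : ℕ) (π : ℕ → ℕ) : List ℕ :=
  ((Finset.Icc 1 n).filter fun i => π (i - 1) < π i ∧ π (i + 1) < π i).sort (· ≤ ·)

/-- The positions of the dells of `π`, from left to right. -/
def dellPosList (n : ℕ) (π : ℕ → ℕ) : List ℕ :=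
  ((Finset.Icc 1 n).filter fun i => π i < π (i - 1) ∧ π i < π (i + 1)).sort (· ≤ ·)

/-- The pinnacles `y_1, …, y_p` of `π`, from left to right. -/
def pinList (n : ℕ) (π : ℕ → ℕ) : List ℕ := (pinPosList n π).map π

/-- The dells `v_1, …, v_{p+1}` of `π`, from left to right. -/
def dellList (n : ℕ) (π : ℕ → ℕ) : List ℕ := (dellPosList n π).map π

/-- The position of the dell `v q` (dells are indexed from `1`). -/
def vPos (n : ℕ) (π : ℕ → ℕ) (q : ℕ) : ℕ := (dellPosList n π).getD (q - 1) 0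

/-- The dell `v q`. -/
def vVal (n : ℕ) (π : ℕ → ℕ) (q : ℕ) : ℕ := π (vPos n π q)

/-- The position of the pinnacle `y q`, where `y 0` is at position `0` and
`y (p+1)` is at position `n+1`. -/
def yPos (n : ℕ) (π : ℕ → ℕ) (q : ℕ) : ℕ :=
  if q = 0 then 0 else (pinPosList n π).getD (q - 1) (n + 1)

/-- The pinnacle `y q`, where `y 0 = π 0 = n+1` and `y (p+1) = π (n+1) = n+2`. -/
def yVal (n : ℕ) (π : ℕ → ℕ) (q : ℕ) : ℕ := π (yPos n π q)

/-- The elements of `π` at positions `1, …, n`, read from left to right. -/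
def toList (n : ℕ) (π : ℕ → ℕ) : List ℕ := (List.range n).map fun i => π (i + 1)

/-- The cutpoint `cutA_π(z, v_q, y_q)`: the largest element `e` of
`A_π(v_q, y_q) ∪ {v_q}` such that `e < z`. -/
noncomputable def cutA (n : ℕ) (π : ℕ → ℕ) (q z : ℕ) : ℕ :=
  sSup ((insert (vVal n π q) (π '' Set.Ioo (vPos n π q) (yPos n π q))) ∩ Set.Iio z)

/-- The cutpoint `cutD_π(z, y_{q-1}, v_q)`: the largest element `e` of
`D_π(y_{q-1}, v_q) ∪ {v_q}` such that `e < z`. -/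
noncomputable def cutD (n : ℕ) (π : ℕ → ℕ) (q z : ℕ) : ℕ :=
  sSup ((insert (vVal n π q) (π '' Set.Ioo (yPos n π (q - 1)) (vPos n π q))) ∩ Set.Iio z)

/-- The canonical permutation `Id_S ∈ S_n` (extended by its boundary values):
the elements of `S` in increasing order at positions `2, 4, …, 2|S|`, and the
elements of `{1,…,n} \ S` in increasing order at the remaining positions. -/
def canon (n : ℕ) (S : Finset ℕ) : ℕ → ℕ := fun i =>
  if i = 0 then n + 1
  else if i = n + 1 then n + 2
  else if i ≤ 2 * S.card ∧ i % 2 = 0 then (S.sort (· ≤ ·)).getD (i / 2 - 1) 0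
  else if i ≤ 2 * S.card then (((Finset.Icc 1 n) \ S).sort (· ≤ ·)).getD ((i - 1) / 2) 0
  else (((Finset.Icc 1 n) \ S).sort (· ≤ ·)).getD (i - S.card - 1) 0

lemma rev_in (π : ℕ → ℕ) (a b i : ℕ) (h1 : a ≤ i) (h2 : i ≤ b) :
    rev π a b i = π (a + b - i) := if_pos ⟨h1, h2⟩

lemma rev_out (π : ℕ → ℕ) (a b i : ℕ) (h : ¬(a ≤ i ∧ i ≤ b)) :
    rev π a b i = π i := if_neg h

/-- Type C.3. Suppose `w₁ = π a` and `w₂ = π b` are pinnacles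
`y_i`, `y_j` of `π` with `i < j` (equivalently `1 ≤ a < b ≤ n`). If
`w₁ > Next π w₂` and `w₂ > Prec π w₁`, then `ρ(w₁, w₂)` is balanced for `π`. -/
theorem statement11 (n : ℕ) (π : ℕ → ℕ) (hπ : IsExtPerm n π) (a b : ℕ)
    (ha : 1 ≤ a) (hab : a < b) (hb : b ≤ n)
    (h1 : PinAt π a) (h2 : PinAt π b)
    (hc1 : π (b + 1) < π a) (hc2 : π (a - 1) < π b) :
    BalancedRev n π a b := by
  obtain ⟨h1a, h1b⟩ := h1
  obtain ⟨h2a, h2b⟩ := h2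
  unfold BalancedRev pinFinset
  ext y
  simp only [Finset.mem_image, Finset.mem_filter, Finset.mem_Icc]
  constructor
  · rintro ⟨i, ⟨⟨hi1, hi2⟩, hp1, hp2⟩, hy⟩
    by_cases hcout : i + 1 < a ∨ b + 1 < i
    · rw [rev_out π a b (i - 1) (by omega), rev_out π a b i (by omega)] at hp1
      rw [rev_out π a b (i + 1) (by omega)] at hp2
      rw [rev_out π a b i (by omega)] at hp2 hy
      exact ⟨i, ⟨⟨hi1, hi2⟩, hp1, hp2⟩, hy⟩
    push_neg at hcout
    by_cases hA : i + 1 = a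
    · exfalso
      rw [rev_in π a b (i + 1) (by omega) (by omega),
        rev_out π a b i (by omega)] at hp2
      rw [show a + b - (i + 1) = b by omega, show i = a - 1 by omega] at hp2
      omega
    by_cases hB : i = a
    · rw [hB, rev_in π a b a le_rfl (by omega), show a + b - a = b by omega] at hy
      exact ⟨b, ⟨⟨by omega, hb⟩, h2a, h2b⟩, hy⟩
    by_cases hC : i = b
    · rw [hC, rev_in π a b b (by omega) le_rfl, show a + b - b = a by omega] at hy
      exact ⟨a, ⟨⟨ha, by omega⟩, h1a, h1b⟩, hy⟩
    by_cases hD : i = b + 1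
    · exfalso
      rw [rev_in π a b (i - 1) (by omega) (by omega),
        rev_out π a b i (by omega)] at hp1
      rw [show a + b - (i - 1) = a by omega, show i = b + 1 by omega] at hp1
      omega
    · -- interior: a < i < b
      rw [rev_in π a b (i - 1) (by omega) (by omega),
        rev_in π a b i (by omega) (by omega)] at hp1
      rw [rev_in π a b (i + 1) (by omega) (by omega)] at hp2
      rw [rev_in π a b i (by omega) (by omega)] at hp2 hy
      rw [show a + b - (i - 1) = (a + b - i) + 1 by omega] at hp1
      rw [show a + b - (i + 1) = (a + b - i) - 1 by omega] at hp2
      exact ⟨a + b - i, ⟨⟨by omega, by omega⟩, hp2, hp1⟩, hy⟩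
  · rintro ⟨j, ⟨⟨hj1, hj2⟩, hp1, hp2⟩, hy⟩
    by_cases hcout : j + 1 < a ∨ b + 1 < j
    · refine ⟨j, ⟨⟨hj1, hj2⟩, ?_, ?_⟩, ?_⟩
      · rw [rev_out π a b (j - 1) (by omega), rev_out π a b j (by omega)]
        exact hp1
      · rw [rev_out π a b (j + 1) (by omega), rev_out π a b j (by omega)]
        exact hp2
      · rw [rev_out π a b j (by omega)]; exact hy
    push_neg at hcout
    by_cases hA : j + 1 = a
    · exfalso
      rw [show j + 1 = a by omega, show j = a - 1 by omega] at hp2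
      omega
    by_cases hB : j = a
    · rw [hB] at hy
      refine ⟨b, ⟨⟨by omega, hb⟩, ?_, ?_⟩, ?_⟩
      · rw [rev_in π a b (b - 1) (by omega) (by omega),
          rev_in π a b b (by omega) le_rfl,
          show a + b - (b - 1) = a + 1 by omega, show a + b - b = a by omega]
        exact h1b
      · rw [rev_out π a b (b + 1) (by omega),
          rev_in π a b b (by omega) le_rfl, show a + b - b = a by omega]
        exact hc1
      · rw [rev_in π a b b (by omega) le_rfl, show a + b - b = a by omega]
        exact hy
    by_cases hC : j = b
    · rw [hC] at hy
      refine ⟨a, ⟨⟨ha, by omega⟩, ?_, ?_⟩, ?_⟩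
      · rw [rev_out π a b (a - 1) (by omega),
          rev_in π a b a le_rfl (by omega), show a + b - a = b by omega]
        exact hc2
      · rw [rev_in π a b (a + 1) (by omega) (by omega),
          rev_in π a b a le_rfl (by omega),
          show a + b - (a + 1) = b - 1 by omega, show a + b - a = b by omega]
        exact h2a
      · rw [rev_in π a b a le_rfl (by omega), show a + b - a = b by omega]
        exact hy
    by_cases hD : j = b + 1
    · exfalso
      rw [show j - 1 = b by omega, show j = b + 1 by omega] at hp1
      omega
    · -- interior: a < j < b
      refine ⟨a + b - j, ⟨⟨by omega, by omega⟩, ?_, ?_⟩, ?_⟩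
      · rw [rev_in π a b (a + b - j - 1) (by omega) (by omega),
          rev_in π a b (a + b - j) (by omega) (by omega),
          show a + b - (a + b - j - 1) = j + 1 by omega,
          show a + b - (a + b - j) = j by omega]
        exact hp2
      · rw [rev_in π a b (a + b - j + 1) (by omega) (by omega),
          rev_in π a b (a + b - j) (by omega) (by omega),
          show a + b - (a + b - j + 1) = j - 1 by omega,
          show a + b - (a + b - j) = j by omega]
        exact hp1
      · rw [rev_in π a b (a + b - j) (by omega) (by omega),
          show a + b - (a + b - j) = j by omega]
        exact hy
end

section
/- Let π ∈ S_n and assume v_i ≤ v_q with i ≤ q, that Prec_π(v_i) is not a pinnacle of π, and that y_0 ≠ Prec_π(v_i) < y_q. Then there exist two balanced reversals transforming π into a permutation π'' such that the only differences between π and π'' are: (i) if Prec_π(v_i) > v_q, then Prec_π(v_i) is moved immediately after cutA_π(Prec_π(v_i), v_q, y_q), so that Prec_π(v_i) ∈ A_{π''}(v_q, y_q); (ii) if Prec_π(v_i) < v_q, then Prec_π(v_i) is moved immediately after v_q and becomes the dell v''_q of π''. -/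
/-!
Let `a + 1` be the position of `v_i`, so that `u = π a`, and let `b` be the position after which `u`
has to land: the position of `v_q` if `u < v_q`, the position of the cutpoint if `v_q < u`.
Reversing `[a + 1, b]` and then `[a, b]` moves `u` to position `b` and shifts the block in between
one step to the left. A reversal changes the neighbourhood of only four positions, and there
`v_i < u < Prec_π(u)` and `u < π (b + 1)` show that no pinnacle appears or disappears.

The cutpoint exists because `π` increases from `v_q` up to `y_q`: counting from the left, dells and
pinnacles alternate, so exactly `q - 1` pinnacles precede `v_q` and none lies between `v_q`
and `y_q`.
When `u < v_q`, position `b` becomes a dell holding `u`; it is still the `q`-th one because the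
two balanced reversals keep the pinnacle set and the set of values in positions `0, …, b`, hence
the number of pinnacles, and therefore of dells, before `b`.
-/

section Reversal
open Finset

def revIdx (a b j : ℕ) : ℕ := if a ≤ j ∧ j ≤ b then a + b - j else j

lemma rev_apply (π : ℕ → ℕ) (a b j : ℕ) : rev π a b j = π (revIdx a b j) := by
  unfold rev revIdx; split_ifs <;> rfl

lemma revIdx_revIdx (a b j : ℕ) : revIdx a b (revIdx a b j) = j := by
  unfold revIdx; split_ifs <;> omega

lemma revIdx_mem_Icc {a b m j : ℕ} (ha : 1 ≤ a) (hb : b ≤ m) (hj : j ∈ Set.Icc 1 m) :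
    revIdx a b j ∈ Set.Icc 1 m := by
  simp only [Set.mem_Icc] at hj ⊢; unfold revIdx; split_ifs <;> omega

lemma revIdx_lt {a b k j : ℕ} (hb : b < k) (hj : j < k) : revIdx a b j < k := by
  unfold revIdx; split_ifs <;> omega

lemma image_range_rev (π : ℕ → ℕ) {a b k : ℕ} (hb : b < k) :
    (range k).image (rev π a b) = (range k).image π := by
  rw [show rev π a b = π ∘ revIdx a b from funext (rev_apply π a b), ← image_image]
  congr 1
  ext j
  simp only [mem_image, mem_range]
  exact ⟨fun ⟨i, hi, hij⟩ => hij ▸ revIdx_lt hb hi,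
    fun hj => ⟨revIdx a b j, revIdx_lt hb hj, revIdx_revIdx a b j⟩⟩

end Reversal

section ExtPerm
variable {n : ℕ} {π : ℕ → ℕ}

lemma IsExtPerm.injOn (hπ : IsExtPerm n π) : Set.InjOn π (Set.Iic (n + 1)) := by
  have hval : ∀ z ≤ n + 1, (z = 0 ∧ π z = n + 1) ∨ (z = n + 1 ∧ π z = n + 2) ∨
      (z ∈ Set.Icc 1 n ∧ π z ∈ Set.Icc 1 n) := by
    intro z hz
    rcases (by omega : z = 0 ∨ z = n + 1 ∨ (1 ≤ z ∧ z ≤ n)) with rfl | rfl | hz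
    · exact Or.inl ⟨rfl, hπ.2.1⟩
    · exact Or.inr (Or.inl ⟨rfl, hπ.2.2⟩)
    · exact Or.inr (Or.inr ⟨hz, hπ.1.mapsTo hz⟩)
  intro x hx y hy hxy
  rcases hval x hx with ⟨rfl, hx'⟩ | ⟨rfl, hx'⟩ | ⟨hx, hx'⟩ <;>
    rcases hval y hy with ⟨rfl, hy'⟩ | ⟨rfl, hy'⟩ | ⟨hy, hy'⟩ <;>
    simp only [Set.mem_Icc] at * <;> try omega
  exact hπ.1.injOn hx hy hxy

lemma IsExtPerm.apply_ne (hπ : IsExtPerm n π) {x y : ℕ} (hx : x ≤ n + 1) (hy : y ≤ n + 1)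
    (hxy : x ≠ y) : π x ≠ π y :=
  fun h => hxy (hπ.injOn (Set.mem_Iic.2 hx) (Set.mem_Iic.2 hy) h)

lemma isExtPerm_rev (hπ : IsExtPerm n π) {a b : ℕ} (ha : 1 ≤ a) (hb : b ≤ n) :
    IsExtPerm n (rev π a b) := by
  have hmaps : Set.MapsTo (revIdx a b) (Set.Icc 1 n) (Set.Icc 1 n) :=
    fun j hj => revIdx_mem_Icc ha hb hj
  have hinv : Set.InvOn (revIdx a b) (revIdx a b) (Set.Icc 1 n) (Set.Icc 1 n) :=
    ⟨fun j _ => revIdx_revIdx a b j, fun j _ => revIdx_revIdx a b j⟩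
  refine ⟨?_, ?_, ?_⟩
  · rw [show rev π a b = π ∘ revIdx a b from funext (rev_apply π a b)]
    exact hπ.1.comp (hinv.bijOn hmaps hmaps)
  · rw [rev_apply, revIdx, if_neg (by omega), hπ.2.1]
  · rw [rev_apply, revIdx, if_neg (by omega), hπ.2.2]

end ExtPerm

section Balanced
open Finset
variable {n : ℕ} {π : ℕ → ℕ} {a b : ℕ}

lemma pinAt_rev_iff (hab : a ≤ b) (H₁ : π a < π (a - 1)) (H₂ : π a < π (b + 1))
    (H₃ : π b < π (b + 1)) (H₄ : π b < π (a - 1) ∨ π b < π (b - 1))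
    (H₅ : π b < π (a - 1) ∨ π (a - 1) < π (a - 2)) (j : ℕ) :
    PinAt (rev π a b) j ↔ PinAt π (revIdx a b j) := by
  -- inside the block the two neighbours are exchanged; `H₁`–`H₅` settle `a - 1`, `a`, `b`, `b + 1`
  simp only [PinAt, rev_apply, revIdx]
  grind

lemma balancedRev (ha : 1 ≤ a) (hab : a ≤ b) (hb : b ≤ n) (H₁ : π a < π (a - 1))
    (H₂ : π a < π (b + 1)) (H₃ : π b < π (b + 1)) (H₄ : π b < π (a - 1) ∨ π b < π (b - 1))
    (H₅ : π b < π (a - 1) ∨ π (a - 1) < π (a - 2)) :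
    BalancedRev n π a b := by
  have hpin := pinAt_rev_iff hab H₁ H₂ H₃ H₄ H₅
  have hmem : ∀ j ∈ Icc 1 n, revIdx a b j ∈ Icc 1 n := by
    intro j hj
    simpa using revIdx_mem_Icc ha hb (by simpa using hj)
  unfold BalancedRev
  ext x
  simp only [pinFinset, mem_image, mem_filter]
  constructor
  · rintro ⟨j, ⟨hj, hjpin⟩, rfl⟩
    exact ⟨revIdx a b j, ⟨hmem j hj, (hpin j).1 hjpin⟩, (rev_apply π a b j).symm⟩
  · rintro ⟨j, ⟨hj, hjpin⟩, rfl⟩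
    refine ⟨revIdx a b j, ⟨hmem j hj, (hpin _).2 ?_⟩, ?_⟩
    · rwa [revIdx_revIdx]
    · rw [rev_apply, revIdx_revIdx]

lemma isBalancedSeq_move (ha : 1 ≤ a) (hab : a < b) (hb : b ≤ n)
    (hdesc : π (a + 1) < π a) (hprec : π a < π (a - 1))
    (hfirst : π (a + 1) < π (b + 1)) (hsecond : π a < π (b + 1)) (hasc : π b < π (b + 1))
    (hend : π b < π a ∨ π b < π (b - 1)) :
    IsBalancedSeq n π [(a + 1, b), (a, b)] := by
  have e₁ : a + 1 - 1 = a := rfl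
  have e₂ : a + 1 - 2 = a - 1 := by omega
  refine ⟨by omega, hab, hb, ?_, ha, hab.le, hb, ?_, trivial⟩
  · exact balancedRev (by omega) hab hb (by rwa [e₁]) hfirst hasc (by rwa [e₁])
      (Or.inr (by rwa [e₁, e₂]))
  · show BalancedRev n (rev π (a + 1) b) a b
    have hprev : rev π (a + 1) b (a - 1) = π (a - 1) := by rw [rev, if_neg (by omega)]
    have hcur : rev π (a + 1) b a = π a := by rw [rev, if_neg (by omega)]
    have hlast : rev π (a + 1) b b = π (a + 1) := by rw [rev, if_pos (by omega)]; congr 1; omega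
    have hnext : rev π (a + 1) b (b + 1) = π (b + 1) := by rw [rev, if_neg (by omega)]
    refine balancedRev ha hab.le hb ?_ ?_ ?_ (Or.inl ?_) (Or.inl ?_) <;>
      simp only [hprev, hcur, hlast, hnext] <;> omega

end Balanced

section Move
variable {n : ℕ} {π : ℕ → ℕ} {a b j : ℕ}

lemma rev_rev_succ_of_lt (h : j < a) : rev (rev π (a + 1) b) a b j = π j := by
  simp only [rev]; split_ifs <;> omega

lemma rev_rev_succ_of_gt (h : b < j) : rev (rev π (a + 1) b) a b j = π j := by
  simp only [rev]; split_ifs <;> omega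

lemma rev_rev_succ_of_mem (h₁ : a ≤ j) (h₂ : j < b) :
    rev (rev π (a + 1) b) a b j = π (j + 1) := by
  simp only [rev]; split_ifs <;> first | omega | (congr 1; omega)

lemma rev_rev_succ_self (hab : a ≤ b) : rev (rev π (a + 1) b) a b b = π a := by
  simp only [rev]; split_ifs <;> first | omega | (congr 1; omega)

lemma toList_eq_map_range' (n : ℕ) (π : ℕ → ℕ) : toList n π = (List.range' 1 n).map π := by
  rw [toList, List.range'_eq_map_range, List.map_map]
  congr 1
  funext i
  simp [add_comm]

lemma List.range'_eq_append_cons {s m k : ℕ} (h₁ : s ≤ k) (h₂ : k < s + m) :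
    List.range' s m = List.range' s (k - s) ++ k :: List.range' (k + 1) (s + m - (k + 1)) := by
  conv_lhs => rw [show m = (k - s) + (s + m - (k + 1) + 1) by omega]
  rw [← List.range'_append, List.range'_succ]
  simp only [Nat.one_mul, show s + (k - s) = k by omega]

lemma toList_rev_rev_succ (ha : 1 ≤ a) (hab : a < b) (hb : b ≤ n)
    (hinj : ∀ j, 1 ≤ j → j < a → π j ≠ π a) :
    ∃ l₁ l₂, (toList n π).erase (π a) = l₁ ++ π b :: l₂ ∧
      toList n (rev (rev π (a + 1) b) a b) = l₁ ++ π b :: π a :: l₂ := by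
  have hsplit : List.range' 1 n = List.range' 1 (a - 1) ++
      a :: (List.range' (a + 1) (b - (a + 1)) ++ b :: List.range' (b + 1) (n - b)) := by
    rw [List.range'_eq_append_cons ha (by omega : a < 1 + n),
      List.range'_eq_append_cons (by omega : a + 1 ≤ b) (by omega : b < a + 1 + (1 + n - (a + 1)))]
    rw [show a + 1 + (1 + n - (a + 1)) - (b + 1) = n - b by omega]
  have hprefix : ∀ k ∈ List.range' 1 (a - 1), k < a := by
    intro k hk; rw [List.mem_range'_1] at hk; omega
  refine ⟨(List.range' 1 (a - 1)).map π ++ (List.range' (a + 1) (b - (a + 1))).map π,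
    (List.range' (b + 1) (n - b)).map π, ?_, ?_⟩
  · have hnot : π a ∉ (List.range' 1 (a - 1)).map π := by
      simp only [List.mem_map, not_exists, not_and]
      intro k hk hka
      exact hinj k (by rw [List.mem_range'_1] at hk; omega) (hprefix k hk) hka
    rw [toList_eq_map_range', hsplit, List.map_append, List.erase_append_right _ hnot]
    simp
  · have hsplit' : List.range' 1 n = List.range' 1 (a - 1) ++
        (List.range' a (b - a) ++ b :: List.range' (b + 1) (n - b)) := by
      have hjoin : List.range' 1 (a - 1) ++ List.range' a (b - a) = List.range' 1 (b - 1) := by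
        simpa [show 1 + (a - 1) = a by omega, show a - 1 + (b - a) = b - 1 by omega] using
          List.range'_append (s := 1) (m := a - 1) (n := b - a) (step := 1)
      rw [← List.append_assoc, hjoin, List.range'_eq_append_cons (by omega : 1 ≤ b)
        (by omega : b < 1 + n), show 1 + n - (b + 1) = n - b by omega]
    have hblock : (List.range' a (b - a)).map (rev (rev π (a + 1) b) a b) =
        (List.range' (a + 1) (b - (a + 1))).map π ++ [π b] := by
      rw [List.map_congr_left (g := fun k => π (1 + k)) fun k hk => by
          rw [List.mem_range'_1] at hk; rw [rev_rev_succ_of_mem hk.1 (by omega), add_comm],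
        show (fun k => π (1 + k)) = π ∘ (1 + ·) from rfl, ← List.map_map, List.map_add_range',
        show b - a = b - (a + 1) + 1 by omega, List.range'_1_concat, List.map_append]
      simp only [List.map_cons, List.map_nil, add_comm 1 a, show a + 1 + (b - (a + 1)) = b by omega]
    rw [toList_eq_map_range', hsplit', List.map_append, List.map_append, hblock, List.map_cons,
      rev_rev_succ_self hab.le,
      List.map_congr_left fun k hk => rev_rev_succ_of_lt (hprefix k hk),
      List.map_congr_left fun k hk => rev_rev_succ_of_gt (by rw [List.mem_range'_1] at hk; omega)]
    simp

end Move

namespace Finset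
variable (s : Finset ℕ) {j k x : ℕ}

lemma nth_eq_getD_sort (k : ℕ) : Nat.nth (· ∈ s) k = (s.sort (· ≤ ·)).getD k 0 := by
  rw [Nat.nth_eq_getD_sort (p := (· ∈ s)) s.finite_toSet, finite_toSet_toFinset]

lemma nth_mem (hk : k < #s) : Nat.nth (· ∈ s) k ∈ s :=
  Nat.nth_mem_of_lt_card (p := (· ∈ s)) s.finite_toSet (by rwa [finite_toSet_toFinset])

lemma count_nth (hk : k < #s) : Nat.count (· ∈ s) (Nat.nth (· ∈ s) k) = k :=
  Nat.count_nth_of_lt_card_finite (p := (· ∈ s)) s.finite_toSet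
    (by rwa [finite_toSet_toFinset])

lemma nth_le_nth (hjk : j ≤ k) (hk : k < #s) : Nat.nth (· ∈ s) j ≤ Nat.nth (· ∈ s) k :=
  Nat.nth_le_nth_of_lt_card (p := (· ∈ s)) s.finite_toSet hjk
    (by rwa [finite_toSet_toFinset])

lemma count_lt_card (hx : x ∈ s) : Nat.count (· ∈ s) x < #s := by
  simpa [finite_toSet_toFinset] using Nat.count_lt_card (p := (· ∈ s)) s.finite_toSet hx

end Finset

def dellPosSet (n : ℕ) (π : ℕ → ℕ) : Finset ℕ :=
  (Finset.Icc 1 n).filter fun i => π i < π (i - 1) ∧ π i < π (i + 1)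

def pinPosSet (n : ℕ) (π : ℕ → ℕ) : Finset ℕ :=
  (Finset.Icc 1 n).filter fun i => π (i - 1) < π i ∧ π (i + 1) < π i

section Positions
open Finset
variable {n : ℕ} {π : ℕ → ℕ} {q : ℕ}

lemma mem_dellPosSet {j : ℕ} : j ∈ dellPosSet n π ↔ (1 ≤ j ∧ j ≤ n) ∧ DellAt π j := by
  rw [dellPosSet, mem_filter, mem_Icc]; rfl

lemma mem_pinPosSet {j : ℕ} : j ∈ pinPosSet n π ↔ (1 ≤ j ∧ j ≤ n) ∧ PinAt π j := by
  rw [pinPosSet, mem_filter, mem_Icc]; rfl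

lemma vPos_eq_nth (q : ℕ) : vPos n π q = Nat.nth (· ∈ dellPosSet n π) (q - 1) := by
  rw [Finset.nth_eq_getD_sort]; rfl

lemma length_dellPosList : (dellPosList n π).length = #(dellPosSet n π) := length_sort _

lemma vPos_mem (hq₁ : 1 ≤ q) (hq : q ≤ (dellPosList n π).length) :
    vPos n π q ∈ dellPosSet n π := by
  rw [vPos_eq_nth]; exact nth_mem _ (by rw [← length_dellPosList]; omega)

lemma count_vPos (hq₁ : 1 ≤ q) (hq : q ≤ (dellPosList n π).length) :
    Nat.count (· ∈ dellPosSet n π) (vPos n π q) = q - 1 := by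
  rw [vPos_eq_nth]; exact count_nth _ (by rw [← length_dellPosList]; omega)

lemma vPos_mono {i : ℕ} (hiq : i ≤ q) (hq : q ≤ (dellPosList n π).length) :
    vPos n π i ≤ vPos n π q := by
  rcases Nat.eq_zero_or_pos q with rfl | hq₁
  · rw [Nat.le_zero.1 hiq]
  rw [vPos_eq_nth, vPos_eq_nth]
  exact nth_le_nth _ (by omega) (by rw [← length_dellPosList]; omega)

lemma yPos_of_lt_card (hq₁ : 1 ≤ q) (h : q - 1 < #(pinPosSet n π)) :
    yPos n π q = Nat.nth (· ∈ pinPosSet n π) (q - 1) := by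
  have h' : q - 1 < (pinPosList n π).length := by rwa [pinPosList, length_sort]
  rw [Finset.nth_eq_getD_sort, yPos, if_neg (by omega), List.getD_eq_getElem _ _ h',
    List.getD_eq_getElem _ _ (by rwa [length_sort])]
  rfl

lemma yPos_of_card_le (hq₁ : 1 ≤ q) (h : #(pinPosSet n π) ≤ q - 1) : yPos n π q = n + 1 := by
  rw [yPos, if_neg (by omega), List.getD_eq_default]
  rwa [pinPosList, length_sort]

lemma yPos_le (hq₁ : 1 ≤ q) : yPos n π q ≤ n + 1 := by
  rcases lt_or_ge (q - 1) #(pinPosSet n π) with h | h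
  · rw [yPos_of_lt_card hq₁ h]
    have := (mem_pinPosSet.1 (nth_mem _ h)).1
    omega
  · rw [yPos_of_card_le hq₁ h]

lemma yPos_le_of_mem_pinPosSet (hq₁ : 1 ≤ q) {f : ℕ} (hf : f ∈ pinPosSet n π)
    (hc : q - 1 ≤ Nat.count (· ∈ pinPosSet n π) f) : yPos n π q ≤ f := by
  have hlt := count_lt_card _ hf
  rw [yPos_of_lt_card hq₁ (by omega), ← Nat.nth_count hf]
  exact nth_le_nth _ hc hlt

lemma IsExtPerm.count_dellPosSet_eq_count_pinPosSet_add (hπ : IsExtPerm n π) {k : ℕ} (hk : k ≤ n) :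
    Nat.count (· ∈ dellPosSet n π) k =
      Nat.count (· ∈ pinPosSet n π) k + if π (k - 1) < π k then 1 else 0 := by
  induction k with
  | zero => simp
  | succ k ih =>
    rw [Nat.count_succ, Nat.count_succ, ih (by omega), Nat.add_sub_cancel]
    rcases Nat.eq_zero_or_pos k with rfl | hk₀
    · have h₁ : π (0 + 1) ≤ n := (hπ.1.mapsTo (Set.mem_Icc.2 ⟨le_refl 1, hk⟩)).2
      have hd : 0 ∉ dellPosSet n π := fun h => by have := (mem_dellPosSet.1 h).1.1; omega
      have hp : 0 ∉ pinPosSet n π := fun h => by have := (mem_pinPosSet.1 h).1.1; omega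
      rw [if_neg hd, if_neg hp, if_neg (lt_irrefl _), if_neg (by rw [hπ.2.1]; omega)]
    · have hne := hπ.apply_ne (x := k) (y := k + 1) (by omega) (by omega) (by omega)
      have hne' := hπ.apply_ne (x := k - 1) (y := k) (by omega) (by omega) (by omega)
      have hd : k ∈ dellPosSet n π ↔ π k < π (k - 1) ∧ π k < π (k + 1) := by
        rw [mem_dellPosSet, DellAt]; omega
      have hp : k ∈ pinPosSet n π ↔ π (k - 1) < π k ∧ π (k + 1) < π k := by
        rw [mem_pinPosSet, PinAt]; omega
      simp only [hd, hp]
      split_ifs <;> omega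

lemma IsExtPerm.count_pinPosSet_vPos (hπ : IsExtPerm n π) (hq₁ : 1 ≤ q)
    (hq : q ≤ (dellPosList n π).length) :
    Nat.count (· ∈ pinPosSet n π) (vPos n π q) = q - 1 := by
  have hv := mem_dellPosSet.1 (vPos_mem hq₁ hq)
  have := hπ.count_dellPosSet_eq_count_pinPosSet_add hv.1.2
  rw [count_vPos hq₁ hq, if_neg (by have := hv.2.1; omega)] at this
  omega

lemma IsExtPerm.vPos_lt_yPos (hπ : IsExtPerm n π) (hq₁ : 1 ≤ q)
    (hq : q ≤ (dellPosList n π).length) : vPos n π q < yPos n π q := by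
  have hv := mem_dellPosSet.1 (vPos_mem hq₁ hq)
  rcases lt_or_ge (q - 1) #(pinPosSet n π) with h | h
  · rw [yPos_of_lt_card hq₁ h]
    have hy := nth_mem _ h
    have hne : Nat.nth (· ∈ pinPosSet n π) (q - 1) ≠ vPos n π q := by
      intro heq
      have := (mem_pinPosSet.1 hy).2.1
      rw [heq] at this
      exact absurd hv.2.1 (by omega)
    by_contra! hle
    have := Nat.count_strict_mono hy (lt_of_le_of_ne hle hne)
    rw [count_nth _ h, hπ.count_pinPosSet_vPos hq₁ hq] at this
    omega
  · rw [yPos_of_card_le hq₁ h]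
    omega

lemma IsExtPerm.notMem_pinPosSet_of_lt_yPos (hπ : IsExtPerm n π) (hq₁ : 1 ≤ q)
    (hq : q ≤ (dellPosList n π).length) {f : ℕ} (hf₁ : vPos n π q < f) (hf₂ : f < yPos n π q) :
    f ∉ pinPosSet n π := by
  intro hf
  have := yPos_le_of_mem_pinPosSet hq₁ hf
    (hπ.count_pinPosSet_vPos hq₁ hq ▸ Nat.count_monotone _ hf₁.le)
  omega

end Positions

lemma strictMonoOn_Icc_of_not_pinAt {π : ℕ → ℕ} {a c : ℕ} (hstart : π a < π (a + 1))
    (hne : ∀ j, a < j → j < c → π j ≠ π (j + 1)) (hpeak : ∀ j, a < j → j < c → ¬ PinAt π j) :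
    StrictMonoOn π (Set.Icc a c) := by
  have hstep : ∀ j, a ≤ j → j + 1 ≤ c → π j < π (j + 1) := by
    intro j hj
    induction j, hj using Nat.le_induction with
    | base => exact fun _ => hstart
    | succ j hj ih =>
      intro hjc
      have hprev := ih (by omega)
      have := hne (j + 1) (by omega) (by omega)
      by_contra hdesc
      exact hpeak (j + 1) (by omega) (by omega) ⟨by simpa using hprev, by omega⟩
  exact strictMonoOn_of_lt_add_one Set.ordConnected_Icc fun j _ hj hj₁ =>
    hstep j hj.1 hj₁.2

section DellInvariance
open Finset
variable {n : ℕ} {π : ℕ → ℕ} {q : ℕ}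

lemma IsExtPerm.strictMonoOn_vPos_yPos (hπ : IsExtPerm n π) (hq₁ : 1 ≤ q)
    (hq : q ≤ (dellPosList n π).length) :
    StrictMonoOn π (Set.Icc (vPos n π q) (yPos n π q)) := by
  have hv := mem_dellPosSet.1 (vPos_mem hq₁ hq)
  have hy := yPos_le (n := n) (π := π) hq₁
  refine strictMonoOn_Icc_of_not_pinAt hv.2.2
    (fun j _ hj => hπ.apply_ne (by omega) (by omega) (by omega)) fun j hj₁ hj₂ hpin => ?_
  exact hπ.notMem_pinPosSet_of_lt_yPos hq₁ hq hj₁ hj₂ (mem_pinPosSet.2 ⟨⟨by omega, by omega⟩, hpin⟩)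

lemma IsExtPerm.count_pinPosSet_eq_card (hπ : IsExtPerm n π) {k : ℕ} (hk : k ≤ n + 1) :
    Nat.count (· ∈ pinPosSet n π) k = #((pinFinset n π).filter (· ∈ (range k).image π)) := by
  have hinj : Set.InjOn π ((range k).filter (· ∈ pinPosSet n π)) := fun x hx y hy =>
    hπ.injOn (Set.mem_Iic.2 (by simp at hx; omega)) (Set.mem_Iic.2 (by simp at hy; omega))
  rw [Nat.count_eq_card_filter_range, ← card_image_of_injOn hinj]
  congr 1
  ext x
  rw [show pinFinset n π = (pinPosSet n π).image π from rfl]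
  simp only [mem_image, mem_filter, mem_range]
  constructor
  · rintro ⟨j, ⟨hjk, hj⟩, rfl⟩
    exact ⟨⟨j, hj, rfl⟩, j, hjk, rfl⟩
  · rintro ⟨⟨j, hj, rfl⟩, i, hik, hij⟩
    have hjn := (mem_pinPosSet.1 hj).1.2
    obtain rfl := hπ.injOn (Set.mem_Iic.2 (by omega)) (Set.mem_Iic.2 (by omega)) hij
    exact ⟨i, ⟨hik, hj⟩, rfl⟩

lemma BalancedRev.count_pinPosSet_rev {a b k : ℕ} (hbal : BalancedRev n π a b)
    (hπ : IsExtPerm n π) (ha : 1 ≤ a) (hb : b < k) (hk : k ≤ n + 1) :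
    Nat.count (· ∈ pinPosSet n (rev π a b)) k = Nat.count (· ∈ pinPosSet n π) k := by
  rw [(isExtPerm_rev hπ ha (by omega)).count_pinPosSet_eq_card hk, hπ.count_pinPosSet_eq_card hk,
    hbal, image_range_rev π hb]

lemma IsExtPerm.vVal_rev_rev_succ (hπ : IsExtPerm n π) (hq₁ : 1 ≤ q)
    (hq : q ≤ (dellPosList n π).length) {a : ℕ} (ha : 1 ≤ a) (hab : a < vPos n π q)
    (hbal : IsBalancedSeq n π [(a + 1, vPos n π q), (a, vPos n π q)])
    (hlt : π a < vVal n π q) :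
    vVal n (rev (rev π (a + 1) (vPos n π q)) a (vPos n π q)) q = π a := by
  set b := vPos n π q
  obtain ⟨-, -, hbn, hbal₁, -, -, -, hbal₂, -⟩ := hbal
  have hv : (1 ≤ b ∧ b ≤ n) ∧ DellAt π b := mem_dellPosSet.1 (vPos_mem hq₁ hq)
  have hσ : IsExtPerm n (rev π (a + 1) b) := isExtPerm_rev hπ (by omega) hbn
  have hτ : IsExtPerm n (rev (rev π (a + 1) b) a b) := isExtPerm_rev hσ ha hbn
  have hτb : rev (rev π (a + 1) b) a b b = π a := rev_rev_succ_self hab.le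
  have hτprev : rev (rev π (a + 1) b) a b (b - 1) = π b := by
    rw [rev_rev_succ_of_mem (by omega) (by omega), Nat.sub_add_cancel (by omega)]
  have hτnext : rev (rev π (a + 1) b) a b (b + 1) = π (b + 1) := rev_rev_succ_of_gt (by omega)
  have hlt' : π a < π b := hlt
  have hdell : b ∈ dellPosSet n (rev (rev π (a + 1) b) a b) :=
    mem_dellPosSet.2 ⟨hv.1, by rw [DellAt, hτb, hτprev, hτnext]; have := hv.2.2; omega⟩
  have hpins : Nat.count (· ∈ pinPosSet n (rev (rev π (a + 1) b) a b)) b =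
      Nat.count (· ∈ pinPosSet n π) b := by
    have h := (hbal₂.count_pinPosSet_rev hσ ha (Nat.lt_succ_self b) (by omega)).trans
      (hbal₁.count_pinPosSet_rev hπ (by omega) (Nat.lt_succ_self b) (by omega))
    have hτb' : b ∉ pinPosSet n (rev (rev π (a + 1) b) a b) := fun h => by
      have := (mem_pinPosSet.1 h).2.1; rw [hτb, hτprev] at this; omega
    have hπb' : b ∉ pinPosSet n π := fun h => by
      have := (mem_pinPosSet.1 h).2.1; have := hv.2.1; omega
    rwa [Nat.count_succ, Nat.count_succ, if_neg hτb', if_neg hπb'] at h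
  have hcount : Nat.count (· ∈ dellPosSet n (rev (rev π (a + 1) b) a b)) b = q - 1 := by
    rw [hτ.count_dellPosSet_eq_count_pinPosSet_add hv.1.2,
      if_neg (by rw [hτprev, hτb]; omega), hpins, hπ.count_pinPosSet_vPos hq₁ hq, add_zero]
  rw [vVal, vPos_eq_nth, ← hcount, Nat.nth_count hdell, hτb]

end DellInvariance

lemma exists_lt_le_succ_of_lt_of_le {f : ℕ → ℕ} {a b z : ℕ} (hab : a ≤ b) (ha : f a < z)
    (hb : z ≤ f b) : ∃ m, a ≤ m ∧ m < b ∧ f m < z ∧ z ≤ f (m + 1) := by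
  induction b, hab using Nat.le_induction with
  | base => omega
  | succ b hab ih =>
    by_cases hfb : f b < z
    · exact ⟨b, hab, by omega, hfb, hb⟩
    · obtain ⟨m, h₁, h₂, h₃, h₄⟩ := ih (by omega)
      exact ⟨m, h₁, by omega, h₃, h₄⟩

section Moves
variable {n : ℕ} {π : ℕ → ℕ} {q : ℕ}

lemma cutA_eq_of_lt_of_lt {m z : ℕ} (hmono : StrictMonoOn π (Set.Icc (vPos n π q) (yPos n π q)))
    (hm₁ : vPos n π q ≤ m) (hm₂ : m < yPos n π q) (hlt : π m < z) (hgt : z < π (m + 1)) :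
    cutA n π q z = π m := by
  have hbound : ∀ j, vPos n π q ≤ j → j < yPos n π q → π j < z → π j ≤ π m := by
    intro j hj₁ hj₂ hjz
    by_contra! hjm
    have hmj : m < j := (hmono.lt_iff_lt ⟨hm₁, hm₂.le⟩ ⟨hj₁, hj₂.le⟩).1 hjm
    have := hmono.monotoneOn (a := m + 1) ⟨by omega, hm₂⟩ ⟨hj₁, hj₂.le⟩ hmj
    omega
  refine IsGreatest.csSup_eq ⟨⟨?_, hlt⟩, ?_⟩
  · rcases hm₁.eq_or_lt with h | h
    · exact h ▸ Set.mem_insert _ _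
    · exact Set.mem_insert_of_mem _ ⟨m, ⟨h, hm₂⟩, rfl⟩
  · rintro x ⟨hx | ⟨j, ⟨hj₁, hj₂⟩, rfl⟩, hxz⟩
    · subst hx
      exact hbound _ le_rfl (by omega) hxz
    · exact hbound j hj₁.le hj₂ hxz

lemma IsExtPerm.exists_prec_vPos (hπ : IsExtPerm n π) {i : ℕ} (hi : 1 ≤ i)
    (hin : i ≤ (dellPosList n π).length) (hupin : π (vPos n π i - 1) ∉ pinFinset n π)
    (huy0 : π (vPos n π i - 1) ≠ n + 1) :
    ∃ a, vPos n π i = a + 1 ∧ 1 ≤ a ∧ π (a + 1) < π a ∧ π a < π (a - 1) := by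
  obtain ⟨⟨hv₁, hvn⟩, hdell⟩ := mem_dellPosSet.1 (vPos_mem hi hin)
  obtain ⟨a, ha⟩ : ∃ a, vPos n π i = a + 1 := ⟨vPos n π i - 1, by omega⟩
  rw [ha] at hupin huy0 hdell
  rw [Nat.add_sub_cancel] at hupin huy0
  have ha₁ : 1 ≤ a := by
    by_contra! h
    obtain rfl : a = 0 := by omega
    exact huy0 hπ.2.1
  refine ⟨a, ha, ha₁, hdell.1, ?_⟩
  have hne := hπ.apply_ne (x := a) (y := a - 1) (by omega) (by omega) (by omega)
  by_contra! h
  exact hupin (Finset.mem_image_of_mem π (mem_pinPosSet.2 ⟨⟨ha₁, by omega⟩, by omega, hdell.1⟩))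

lemma IsExtPerm.exists_move_to_dell (hπ : IsExtPerm n π) (hq₁ : 1 ≤ q)
    (hq : q ≤ (dellPosList n π).length) {a : ℕ} (ha : 1 ≤ a) (hab : a < vPos n π q)
    (hdesc : π (a + 1) < π a) (hprec : π a < π (a - 1)) (hlt : π a < vVal n π q) :
    ∃ L : List (ℕ × ℕ), IsBalancedSeq n π L ∧ L.length = 2 ∧
      (∃ l₁ l₂, (toList n π).erase (π a) = l₁ ++ vVal n π q :: l₂ ∧
        toList n (applySeq π L) = l₁ ++ vVal n π q :: π a :: l₂) ∧
      vVal n (applySeq π L) q = π a := by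
  obtain ⟨⟨-, hbn⟩, hprev, hnext⟩ := mem_dellPosSet.1 (vPos_mem hq₁ hq)
  have hlt' : π a < π (vPos n π q) := hlt
  have hbal := isBalancedSeq_move ha hab hbn hdesc hprec (by omega) (by omega) hnext
    (Or.inr hprev)
  exact ⟨_, hbal, rfl,
    toList_rev_rev_succ ha hab hbn fun j _ hj => hπ.apply_ne (by omega) (by omega) (by omega),
    hπ.vVal_rev_rev_succ hq₁ hq ha hab hbal hlt⟩

lemma IsExtPerm.exists_move_to_ascent (hπ : IsExtPerm n π) (hq₁ : 1 ≤ q)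
    (hq : q ≤ (dellPosList n π).length) {a : ℕ} (ha : 1 ≤ a) (hab : a < vPos n π q)
    (hdesc : π (a + 1) < π a) (hprec : π a < π (a - 1)) (hgt : vVal n π q < π a)
    (hay : π a < yVal n π q) :
    ∃ L : List (ℕ × ℕ), IsBalancedSeq n π L ∧ L.length = 2 ∧
      (∃ l₁ l₂, (toList n π).erase (π a) = l₁ ++ cutA n π q (π a) :: l₂ ∧
        toList n (applySeq π L) = l₁ ++ cutA n π q (π a) :: π a :: l₂) ∧
      ∃ c, 1 ≤ c ∧ c ≤ n ∧ applySeq π L c = π a ∧ AscAt (applySeq π L) c := by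
  have hmono := hπ.strictMonoOn_vPos_yPos hq₁ hq
  have hy := yPos_le (n := n) (π := π) hq₁
  obtain ⟨m, hm₁, hm₂, hmu, hum⟩ :=
    exists_lt_le_succ_of_lt_of_le (hπ.vPos_lt_yPos hq₁ hq).le hgt hay.le
  have hum' : π a < π (m + 1) :=
    lt_of_le_of_ne hum (hπ.apply_ne (by omega) (by omega) (by omega))
  have hasc : π m < π (m + 1) := hmono ⟨hm₁, hm₂.le⟩ ⟨by omega, hm₂⟩ (Nat.lt_succ_self m)
  have hbal := isBalancedSeq_move ha (by omega) (by omega : m ≤ n) hdesc hprec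
    (by omega) hum' hasc (Or.inl hmu)
  have hprev : rev (rev π (a + 1) m) a m (m - 1) = π m := by
    rw [rev_rev_succ_of_mem (by omega) (by omega), Nat.sub_add_cancel (by omega)]
  refine ⟨_, hbal, rfl, ?_, m, by omega, by omega, rev_rev_succ_self (by omega), ?_⟩
  · rw [cutA_eq_of_lt_of_lt hmono hm₁ hm₂ hmu hum']
    exact toList_rev_rev_succ ha (by omega) (by omega) fun j _ hj =>
      hπ.apply_ne (by omega) (by omega) (by omega)
  · show rev (rev π (a + 1) m) a m (m - 1) < rev (rev π (a + 1) m) a m m ∧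
      rev (rev π (a + 1) m) a m m < rev (rev π (a + 1) m) a m (m + 1)
    rw [hprev, rev_rev_succ_self (by omega), rev_rev_succ_of_gt (by omega)]
    exact ⟨hmu, hum'⟩

end Moves

theorem statement15_general (n : ℕ) (π : ℕ → ℕ) (hπ : IsExtPerm n π)
    (i q : ℕ) (hi : 1 ≤ i) (hiq : i ≤ q) (hq : q ≤ (dellPosList n π).length)
    (u : ℕ) (hu : u = π (vPos n π i - 1))
    (hupin : u ∉ pinFinset n π)
    (huy0 : u ≠ n + 1)
    (huyq : u < yVal n π q) :
    ∃ L : List (ℕ × ℕ), IsBalancedSeq n π L ∧ L.length = 2 ∧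
      (vVal n π q < u →
        (∃ l₁ l₂, (toList n π).erase u = l₁ ++ cutA n π q u :: l₂ ∧
          toList n (applySeq π L) = l₁ ++ cutA n π q u :: u :: l₂) ∧
        ∃ c, 1 ≤ c ∧ c ≤ n ∧ applySeq π L c = u ∧ AscAt (applySeq π L) c) ∧
      (u < vVal n π q →
        (∃ l₁ l₂, (toList n π).erase u = l₁ ++ vVal n π q :: l₂ ∧
          toList n (applySeq π L) = l₁ ++ vVal n π q :: u :: l₂) ∧
        vVal n (applySeq π L) q = u) := by
  subst hu
  have hq₁ : 1 ≤ q := hi.trans hiq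
  obtain ⟨a, hva, ha, hdesc, hprec⟩ := hπ.exists_prec_vPos hi (hiq.trans hq) hupin huy0
  have hab : a + 1 ≤ vPos n π q := hva ▸ vPos_mono hiq hq
  rw [hva, Nat.add_sub_cancel] at huyq ⊢
  have hqn := (mem_dellPosSet.1 (vPos_mem hq₁ hq)).1.2
  have hne : π a ≠ vVal n π q := hπ.apply_ne (by omega) (by omega) (by omega)
  rcases hne.lt_or_gt with hlt | hgt
  · obtain ⟨L, hL, hlen, hlist, hdell⟩ := hπ.exists_move_to_dell hq₁ hq ha hab hdesc hprec hlt
    exact ⟨L, hL, hlen, fun h => absurd h hlt.not_gt, fun _ => ⟨hlist, hdell⟩⟩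
  · obtain ⟨L, hL, hlen, hlist, hasc⟩ :=
      hπ.exists_move_to_ascent hq₁ hq ha hab hdesc hprec hgt huyq
    exact ⟨L, hL, hlen, fun _ => ⟨hlist, hasc⟩, fun h => absurd h hgt.not_gt⟩

/-- Lemma 4.4. Assume `v_i ≤ v_q` with `i ≤ q`, and that
`u = Prec π v_i` is not a pinnacle and satisfies `y_0 ≠ u < y_q`. Then two
balanced reversals transform `π` into `π''` whose only difference with `π` is:
(i) if `u > v_q`, `u` is moved immediately after `cutA_π(u, v_q, y_q)` — so that
`u` lies in the ascending set `A_{π''}(v_q, y_q)`;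
(ii) if `u < v_q`, `u` is moved immediately after `v_q` and becomes the dell
`v''_q` of `π''`. -/
theorem statement15 (n : ℕ) (π : ℕ → ℕ) (hπ : IsExtPerm n π)
    (i q : ℕ) (hi : 1 ≤ i) (hiq : i ≤ q) (hq : q ≤ (dellPosList n π).length)
    (hvv : vVal n π i ≤ vVal n π q)
    (u : ℕ) (hu : u = π (vPos n π i - 1))
    (hupin : u ∉ pinFinset n π)
    (huy0 : u ≠ n + 1)
    (huyq : u < yVal n π q) :
    ∃ L : List (ℕ × ℕ), IsBalancedSeq n π L ∧ L.length = 2 ∧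
      (vVal n π q < u →
        (∃ l₁ l₂, (toList n π).erase u = l₁ ++ cutA n π q u :: l₂ ∧
          toList n (applySeq π L) = l₁ ++ cutA n π q u :: u :: l₂) ∧
        ∃ c, 1 ≤ c ∧ c ≤ n ∧ applySeq π L c = u ∧ AscAt (applySeq π L) c) ∧
      (u < vVal n π q →
        (∃ l₁ l₂, (toList n π).erase u = l₁ ++ vVal n π q :: l₂ ∧
          toList n (applySeq π L) = l₁ ++ vVal n π q :: u :: l₂) ∧
        vVal n (applySeq π L) q = u) :=
  statement15_general n π hπ i q hi hiq hq u hu hupin huy0 huyq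
end
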